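/- arXiv:2403.14178 — 6 statements merged into one kernel-verified Lean document; each statement's English description precedes it below -/
import Mathlib

section
/- For all positive real parameters α, β, ξ and all stresses m ∈ ℝ², τ ∈ ℝ^{2×2}, the strains (χ, γ) = S(m, τ) produced by the strain-limiting constitutive map satisfy Q(χ, γ) < 1. -/
noncomputable section

/-- The quadratic form `Q(χ, γ)` on strains. -/
def Qform (α β ξ : ℝ) (χ : Fin 2 → ℝ) (γ : Fin 2 → Fin 2 → ℝ) : ℝ :=
  β ^ 2 * (α ^ 2 * ((χ 0) ^ 2 + (χ 1) ^ 2) +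
    ξ ^ 2 * ((γ 0 0) ^ 2 + (γ 0 1) ^ 2 + (γ 1 0) ^ 2 + (γ 1 1) ^ 2))

/-- The quadratic form `Q*(m, τ)` on stresses. -/
def Qstar (α β ξ : ℝ) (m : Fin 2 → ℝ) (τ : Fin 2 → Fin 2 → ℝ) : ℝ :=
  β ^ 2 * (((m 0) ^ 2 + (m 1) ^ 2) / α ^ 2 +
    ((τ 0 0) ^ 2 + (τ 0 1) ^ 2 + (τ 1 0) ^ 2 + (τ 1 1) ^ 2) / ξ ^ 2)

/-- The strain-limiting constitutive map `S` sending stresses to strains. -/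
def Smap (α β ξ : ℝ) (m : Fin 2 → ℝ) (τ : Fin 2 → Fin 2 → ℝ) :
    (Fin 2 → ℝ) × (Fin 2 → Fin 2 → ℝ) :=
  (fun i => m i / (α ^ 2 * (1 + Real.sqrt (Qstar α β ξ m τ))),
   fun i j => τ i j / (ξ ^ 2 * (1 + Real.sqrt (Qstar α β ξ m τ))))

/-- The inverse constitutive map `T` sending strains to stresses. -/
def Tmap (α β ξ : ℝ) (χ : Fin 2 → ℝ) (γ : Fin 2 → Fin 2 → ℝ) :
    (Fin 2 → ℝ) × (Fin 2 → Fin 2 → ℝ) :=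
  (fun i => α ^ 2 * χ i / (1 - Real.sqrt (Qform α β ξ χ γ)),
   fun i j => ξ ^ 2 * γ i j / (1 - Real.sqrt (Qform α β ξ χ γ)))

/-- The strain-energy density `W(χ, γ)`. -/
def Wdens (α β ξ : ℝ) (χ : Fin 2 → ℝ) (γ : Fin 2 → Fin 2 → ℝ) : ℝ :=
  -(1 / β ^ 2) * (Real.sqrt (Qform α β ξ χ γ) +
    Real.log (1 - Real.sqrt (Qform α β ξ χ γ)))

/-- The complementary strain-energy density `W*(m, τ)`. -/
def Wstar (α β ξ : ℝ) (m : Fin 2 → ℝ) (τ : Fin 2 → Fin 2 → ℝ) : ℝ :=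
  (1 / β ^ 2) * (Real.sqrt (Qstar α β ξ m τ) -
    Real.log (1 + Real.sqrt (Qstar α β ξ m τ)))

theorem sq_mul_div_sq_mul_sq (a x c : ℝ) :
    a ^ 2 * (x / (a ^ 2 * c)) ^ 2 = x ^ 2 / a ^ 2 / c ^ 2 := by
  rcases eq_or_ne a 0 with rfl | ha
  · simp
  · rw [div_pow, mul_pow]
    field_simp

theorem div_one_add_sqrt_sq_lt_one {q : ℝ} (hq : 0 ≤ q) : q / (1 + √q) ^ 2 < 1 := by
  have hsqrt : 0 ≤ √q := Real.sqrt_nonneg q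
  rw [div_lt_one (by positivity), add_sq, Real.sq_sqrt hq]
  linarith

theorem Qstar_nonneg (α β ξ : ℝ) (m : Fin 2 → ℝ) (τ : Fin 2 → Fin 2 → ℝ) :
    0 ≤ Qstar α β ξ m τ := by
  unfold Qstar
  positivity

theorem Qform_Smap (α β ξ : ℝ) (m : Fin 2 → ℝ) (τ : Fin 2 → Fin 2 → ℝ) :
    Qform α β ξ (Smap α β ξ m τ).1 (Smap α β ξ m τ).2 =
      Qstar α β ξ m τ / (1 + √(Qstar α β ξ m τ)) ^ 2 := by
  simp only [Qform, Smap]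
  generalize 1 + √(Qstar α β ξ m τ) = c
  simp only [mul_add, sq_mul_div_sq_mul_sq]
  unfold Qstar
  ring

theorem strain_limiting_general (α β ξ : ℝ)
    (m : Fin 2 → ℝ) (τ : Fin 2 → Fin 2 → ℝ) :
    Qform α β ξ (Smap α β ξ m τ).1 (Smap α β ξ m τ).2 < 1 := by
  rw [Qform_Smap]
  exact div_one_add_sqrt_sq_lt_one (Qstar_nonneg α β ξ m τ)

/-- the strains produced by the strain-limiting constitutive map
satisfy `Q(χ, γ) < 1`. -/
theorem strain_limiting (α β ξ : ℝ) (hα : 0 < α) (hβ : 0 < β) (hξ : 0 < ξ)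
    (m : Fin 2 → ℝ) (τ : Fin 2 → Fin 2 → ℝ) :
    Qform α β ξ (Smap α β ξ m τ).1 (Smap α β ξ m τ).2 < 1 :=
  strain_limiting_general α β ξ m τ
end
end

section
/- For all positive real parameters α, β, ξ and all stresses m ∈ ℝ², τ ∈ ℝ^{2×2}, the strains (χ, γ) = S(m, τ) satisfy the identity Q(χ, γ) = Q*(m, τ)/(1 + √(Q*(m, τ)))². -/
noncomputable section

/- Also for `a = 0` or `d = 0`: both sides are then `0`, as `0⁻¹ = 0`. -/
theorem mul_div_mul_sq {K : Type*} [Field K] (a x d : K) :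
    a * (x / (a * d)) ^ 2 = x ^ 2 / a / d ^ 2 :=
  calc a * (x / (a * d)) ^ 2 = x ^ 2 * (a / (a * a)) / d ^ 2 := by ring
    _ = x ^ 2 / a / d ^ 2 := by rw [div_self_mul_self']; ring

theorem Q_of_S_general (α β ξ : ℝ)
    (m : Fin 2 → ℝ) (τ : Fin 2 → Fin 2 → ℝ) :
    Qform α β ξ (Smap α β ξ m τ).1 (Smap α β ξ m τ).2 =
      Qstar α β ξ m τ / (1 + Real.sqrt (Qstar α β ξ m τ)) ^ 2 := by
  rw [Smap]
  generalize 1 + Real.sqrt (Qstar α β ξ m τ) = d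
  simp only [Qform, mul_add, mul_div_mul_sq]
  rw [Qstar]
  ring

/-- `Q(S(m, τ)) = Q*(m, τ) / (1 + √(Q*(m, τ)))²`. -/
theorem Q_of_S (α β ξ : ℝ) (hα : 0 < α) (hβ : 0 < β) (hξ : 0 < ξ)
    (m : Fin 2 → ℝ) (τ : Fin 2 → Fin 2 → ℝ) :
    Qform α β ξ (Smap α β ξ m τ).1 (Smap α β ξ m τ).2 =
      Qstar α β ξ m τ / (1 + Real.sqrt (Qstar α β ξ m τ)) ^ 2 :=
  Q_of_S_general α β ξ m τ
end
end

section
/- For all positive real parameters α, β, ξ and all strains χ ∈ ℝ², γ ∈ ℝ^{2×2} with Q(χ, γ) < 1, applying the strain-limiting constitutive map to the stresses T(χ, γ) recovers the strains: S(T(χ, γ)) = (χ, γ). -/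
noncomputable section

/-
Since `T` scales the strains by `α²/(1 - √Q)` and `ξ²/(1 - √Q)`, one has `Q*(T(χ, γ)) = Q(χ, γ)/(1 - √Q)²`,
hence `1 + √Q*(T(χ, γ)) = 1/(1 - √Q)` and the denominators of `S` exactly undo the scaling.
-/

lemma Qform_nonneg (α β ξ : ℝ) (χ : Fin 2 → ℝ) (γ : Fin 2 → Fin 2 → ℝ) :
    0 ≤ Qform α β ξ χ γ := by
  unfold Qform
  positivity

lemma one_sub_sqrt_pos {x : ℝ} (hx : x < 1) : 0 < 1 - √x :=
  sub_pos.2 ((Real.sqrt_lt' one_pos).2 (by rwa [one_pow]))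

lemma Qstar_Tmap (α β ξ : ℝ) (χ : Fin 2 → ℝ) (γ : Fin 2 → Fin 2 → ℝ) :
    Qstar α β ξ (Tmap α β ξ χ γ).1 (Tmap α β ξ χ γ).2 =
      Qform α β ξ χ γ / (1 - √(Qform α β ξ χ γ)) ^ 2 := by
  simp only [Qstar, Tmap, Qform]
  field_simp

lemma one_add_sqrt_Qstar_Tmap {α β ξ : ℝ} {χ : Fin 2 → ℝ} {γ : Fin 2 → Fin 2 → ℝ}
    (hQ : Qform α β ξ χ γ < 1) :
    1 + √(Qstar α β ξ (Tmap α β ξ χ γ).1 (Tmap α β ξ χ γ).2) =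
      (1 - √(Qform α β ξ χ γ))⁻¹ := by
  have hs : 0 < 1 - √(Qform α β ξ χ γ) := one_sub_sqrt_pos hQ
  rw [Qstar_Tmap, Real.sqrt_div (Qform_nonneg α β ξ χ γ), Real.sqrt_sq hs.le]
  field_simp
  ring

theorem S_of_T_general (α β ξ : ℝ) (hα : 0 < α) (hξ : 0 < ξ)
    (χ : Fin 2 → ℝ) (γ : Fin 2 → Fin 2 → ℝ) (hQ : Qform α β ξ χ γ < 1) :
    Smap α β ξ (Tmap α β ξ χ γ).1 (Tmap α β ξ χ γ).2 = (χ, γ) := by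
  have hs : 1 - √(Qform α β ξ χ γ) ≠ 0 := (one_sub_sqrt_pos hQ).ne'
  have hden := one_add_sqrt_Qstar_Tmap hQ
  ext <;>
  · rw [Smap, hden]
    simp only [Tmap]
    field_simp

/-- for strains with `Q(χ, γ) < 1`, `S(T(χ, γ)) = (χ, γ)`. -/
theorem S_of_T (α β ξ : ℝ) (hα : 0 < α) (hβ : 0 < β) (hξ : 0 < ξ)
    (χ : Fin 2 → ℝ) (γ : Fin 2 → Fin 2 → ℝ) (hQ : Qform α β ξ χ γ < 1) :
    Smap α β ξ (Tmap α β ξ χ γ).1 (Tmap α β ξ χ γ).2 = (χ, γ) :=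
  S_of_T_general α β ξ hα hξ χ γ hQ
end
end

section
/- For all positive real parameters α, β, ξ and all stresses m ∈ ℝ², τ ∈ ℝ^{2×2}, the strains (χ, γ) = S(m, τ) are componentwise bounded independently of the magnitude of the stresses: |χᵢ| < 1/(α·β) for i = 1, 2 and |γᵢⱼ| < 1/(ξ·β) for i, j = 1, 2. -/
noncomputable section

/-! Writing `s = √Q*(m, τ)`, each stress component satisfies `β |mᵢ| / α ≤ s` and
`β |τᵢⱼ| / ξ ≤ s`, since `Q*` dominates each of its summands. Hence
`|χᵢ| ≤ s / (α β (1 + s)) < 1 / (α β)`, and likewise for `γᵢⱼ`. -/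

lemma apply_le_add_fin_two {v : Fin 2 → ℝ} (hv : ∀ k, 0 ≤ v k) (i : Fin 2) : v i ≤ v 0 + v 1 := by
  fin_cases i <;> simp [hv]

lemma abs_div_sq_mul_one_add_sqrt_lt {a b x Q : ℝ} (ha : 0 < a) (hb : 0 < b)
    (hQ : (b * x / a) ^ 2 ≤ Q) : |x / (a ^ 2 * (1 + √Q))| < 1 / (a * b) := by
  have hx : b * |x| / a ≤ √Q := by
    simpa [abs_div, abs_mul, abs_of_pos ha, abs_of_pos hb] using Real.abs_le_sqrt hQ
  have hs : 0 ≤ √Q := Real.sqrt_nonneg Q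
  have hden : 0 < a ^ 2 * (1 + √Q) := by positivity
  rw [abs_div, abs_of_pos hden, div_lt_div_iff₀ hden (by positivity), one_mul]
  calc |x| * (a * b) = a ^ 2 * (b * |x| / a) := by field_simp
    _ ≤ a ^ 2 * √Q := by gcongr
    _ < a ^ 2 * (1 + √Q) := by gcongr; linarith

lemma sq_stress_div_le_Qstar (α β ξ : ℝ) (m : Fin 2 → ℝ) (τ : Fin 2 → Fin 2 → ℝ) (i : Fin 2) :
    (β * m i / α) ^ 2 ≤ Qstar α β ξ m τ := by
  have hm : m i ^ 2 / α ^ 2 ≤ (m 0 ^ 2 + m 1 ^ 2) / α ^ 2 := by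
    gcongr; exact apply_le_add_fin_two (fun k => sq_nonneg (m k)) i
  have hτ : 0 ≤ (τ 0 0 ^ 2 + τ 0 1 ^ 2 + τ 1 0 ^ 2 + τ 1 1 ^ 2) / ξ ^ 2 := by positivity
  rw [Qstar, div_pow, mul_pow, mul_div_assoc]
  gcongr
  linarith

lemma sq_couple_stress_div_le_Qstar (α β ξ : ℝ) (m : Fin 2 → ℝ) (τ : Fin 2 → Fin 2 → ℝ)
    (i j : Fin 2) : (β * τ i j / ξ) ^ 2 ≤ Qstar α β ξ m τ := by
  have hrow := apply_le_add_fin_two (v := fun l => τ i l ^ 2) (fun l => sq_nonneg _) j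
  have hcol := apply_le_add_fin_two (v := fun k => τ k 0 ^ 2 + τ k 1 ^ 2) (fun k => by positivity) i
  have hτ : τ i j ^ 2 / ξ ^ 2 ≤ (τ 0 0 ^ 2 + τ 0 1 ^ 2 + τ 1 0 ^ 2 + τ 1 1 ^ 2) / ξ ^ 2 := by
    gcongr; linarith
  have hm : 0 ≤ (m 0 ^ 2 + m 1 ^ 2) / α ^ 2 := by positivity
  rw [Qstar, div_pow, mul_pow, mul_div_assoc]
  gcongr
  linarith

/-- the strains `S(m, τ)` are componentwise bounded independently
of the magnitude of the stresses: `|χᵢ| < 1/(α·β)` and `|γᵢⱼ| < 1/(ξ·β)`. -/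
theorem strain_componentwise_bounded (α β ξ : ℝ) (hα : 0 < α) (hβ : 0 < β) (hξ : 0 < ξ)
    (m : Fin 2 → ℝ) (τ : Fin 2 → Fin 2 → ℝ) :
    (∀ i : Fin 2, |(Smap α β ξ m τ).1 i| < 1 / (α * β)) ∧
      (∀ i j : Fin 2, |(Smap α β ξ m τ).2 i j| < 1 / (ξ * β)) :=
  ⟨fun i => abs_div_sq_mul_one_add_sqrt_lt hα hβ (sq_stress_div_le_Qstar α β ξ m τ i),
   fun i j => abs_div_sq_mul_one_add_sqrt_lt hξ hβ (sq_couple_stress_div_le_Qstar α β ξ m τ i j)⟩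
end
end

section
/- Let α, β, ξ be positive reals and let χ ∈ ℝ², γ ∈ ℝ^{2×2} satisfy 0 < Q(χ, γ) < 1, and write q = Q(χ, γ). Then W is twice Fréchet differentiable at (χ, γ), and for all a = (a₁, a₂) ∈ ℝ² and b = (b₁₁, b₁₂, b₂₁, b₂₂) ∈ ℝ^{2×2}, the second-derivative quadratic form satisfies D²W(χ, γ)[(a, b), (a, b)] = (1/β²)·Q(a, b)/(1 − √q) + (β²/(√q·(1 − √q)²))·(α²·(a₁·χ₁ + a₂·χ₂) + ξ²·(b₁₁·γ₁₁ + b₁₂·γ₁₂ + b₂₁·γ₂₁ + b₂₂·γ₂₂))². -/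
noncomputable section

/-!
Write `W = φ ∘ Q` with `φ q = -(1/β²)(√q + log(1 - √q))` and `Q p = B(p, p)` for the polar form
`B` of `Q`. Then `DW(p) = 2 φ'(Q p) B(p, ·)` near `p`, hence
`D²W(p)[u, u] = 4 φ''(Q p) B(p, u)² + 2 φ'(Q p) B(u, u)`, and on `0 < q < 1` one computes
`φ' q = 1 / (2β²(1 - √q))` and `φ'' q = 1 / (4β²√q(1 - √q)²)`.
-/

open Filter Topology

section QuadraticComposition

variable {E : Type*} [NormedAddCommGroup E] [NormedSpace ℝ E] {B : E →L[ℝ] E →L[ℝ] ℝ}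

theorem hasFDerivAt_bilinear_diag (hB : ∀ u v, B u v = B v u) (x : E) :
    HasFDerivAt (fun y => B y y) ((2 : ℝ) • B x) x := by
  refine (B.hasFDerivAt.clm_apply (hasFDerivAt_id x)).congr_fderiv ?_
  ext u
  simp [two_smul, hB u x]

theorem HasDerivAt.comp_bilinear_diag (hB : ∀ u v, B u v = B v u) {φ : ℝ → ℝ} {φ' : ℝ}
    {x : E} (hφ : HasDerivAt φ φ' (B x x)) :
    HasFDerivAt (fun y => φ (B y y)) ((2 * φ') • B x) x := by
  refine (hφ.comp_hasFDerivAt (f := fun y => B y y) x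
    (hasFDerivAt_bilinear_diag hB x)).congr_fderiv ?_
  rw [smul_smul, mul_comm]

theorem hasFDerivAt_fderiv_comp_bilinear_diag (hB : ∀ u v, B u v = B v u)
    {φ φ' : ℝ → ℝ} {φ'' : ℝ} {x : E}
    (hφ : ∀ᶠ q in 𝓝 (B x x), HasDerivAt φ (φ' q) q) (hφ' : HasDerivAt φ' φ'' (B x x)) :
    HasFDerivAt (fderiv ℝ fun y => φ (B y y))
      ((2 * φ' (B x x)) • B + (4 * φ'') • (B x).smulRight (B x)) x := by
  have hQ : Continuous fun y => B y y := by fun_prop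
  have hfderiv : (fderiv ℝ fun y => φ (B y y)) =ᶠ[𝓝 x] fun y => (2 * φ' (B y y)) • B y :=
    (hQ.continuousAt.eventually hφ).mono fun y hy => (hy.comp_bilinear_diag hB).fderiv
  have hscalar : HasFDerivAt (fun y => 2 * φ' (B y y)) ((2 : ℝ) • (2 * φ'') • B x) x :=
    (hφ'.comp_bilinear_diag hB).const_mul 2
  refine ((hscalar.smul B.hasFDerivAt).congr_of_eventuallyEq hfderiv).congr_fderiv ?_
  ext u v
  simp only [add_apply, smul_apply, ContinuousLinearMap.smulRight_apply, smul_eq_mul,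
    add_right_inj]
  ring

end QuadraticComposition

section StrainEnergy

def Qpolar (α β ξ : ℝ) :
    (Fin 2 → ℝ) × (Fin 2 → Fin 2 → ℝ) →L[ℝ] (Fin 2 → ℝ) × (Fin 2 → Fin 2 → ℝ) →L[ℝ] ℝ :=
  LinearMap.toContinuousLinearMap <| LinearMap.toContinuousLinearMap.toLinearMap ∘ₗ
    LinearMap.mk₂ ℝ (fun p u => β ^ 2 * (α ^ 2 * (p.1 0 * u.1 0 + p.1 1 * u.1 1) +
      ξ ^ 2 * (p.2 0 0 * u.2 0 0 + p.2 0 1 * u.2 0 1 + p.2 1 0 * u.2 1 0 + p.2 1 1 * u.2 1 1)))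
    (fun _ _ _ => by simp only [Prod.fst_add, Prod.snd_add, Pi.add_apply]; ring)
    (fun _ _ _ => by simp only [Prod.smul_fst, Prod.smul_snd, Pi.smul_apply, smul_eq_mul]; ring)
    (fun _ _ _ => by simp only [Prod.fst_add, Prod.snd_add, Pi.add_apply]; ring)
    (fun _ _ _ => by simp only [Prod.smul_fst, Prod.smul_snd, Pi.smul_apply, smul_eq_mul]; ring)

@[simp]
theorem Qpolar_apply (α β ξ : ℝ) (p u : (Fin 2 → ℝ) × (Fin 2 → Fin 2 → ℝ)) :
    Qpolar α β ξ p u = β ^ 2 * (α ^ 2 * (p.1 0 * u.1 0 + p.1 1 * u.1 1) +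
      ξ ^ 2 * (p.2 0 0 * u.2 0 0 + p.2 0 1 * u.2 0 1 + p.2 1 0 * u.2 1 0 + p.2 1 1 * u.2 1 1)) :=
  rfl

theorem Qpolar_comm (α β ξ : ℝ) (p u : (Fin 2 → ℝ) × (Fin 2 → Fin 2 → ℝ)) :
    Qpolar α β ξ p u = Qpolar α β ξ u p := by
  simp only [Qpolar_apply]; ring

theorem Qpolar_self (α β ξ : ℝ) (p : (Fin 2 → ℝ) × (Fin 2 → Fin 2 → ℝ)) :
    Qpolar α β ξ p p = Qform α β ξ p.1 p.2 := by
  simp only [Qpolar_apply, Qform]; ring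

def energyProfile (c q : ℝ) : ℝ := -c * (Real.sqrt q + Real.log (1 - Real.sqrt q))

variable {q : ℝ}

theorem one_sub_sqrt_pos_s13 (hq : q < 1) : 0 < 1 - Real.sqrt q :=
  sub_pos.2 ((Real.sqrt_lt' one_pos).2 (by simpa))

theorem hasDerivAt_energyProfile (c : ℝ) (hq₀ : 0 < q) (hq₁ : q < 1) :
    HasDerivAt (energyProfile c) (c / (2 * (1 - Real.sqrt q))) q := by
  have hs₁ := one_sub_sqrt_pos_s13 hq₁
  have hsqrt := Real.hasDerivAt_sqrt hq₀.ne'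
  refine ((hsqrt.add ((hsqrt.const_sub 1).log hs₁.ne')).const_mul (-c)).congr_deriv ?_
  field_simp
  ring

theorem hasDerivAt_deriv_energyProfile (c : ℝ) (hq₀ : 0 < q) (hq₁ : q < 1) :
    HasDerivAt (fun q => c / (2 * (1 - Real.sqrt q)))
      (c / (4 * Real.sqrt q * (1 - Real.sqrt q) ^ 2)) q := by
  have hs₁ := one_sub_sqrt_pos_s13 hq₁
  refine ((hasDerivAt_const q c).fun_div
    (((Real.hasDerivAt_sqrt hq₀.ne').const_sub 1).const_mul 2) (by positivity)).congr_deriv ?_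
  field_simp
  ring

end StrainEnergy

theorem secondDeriv_Wdens_general (α β ξ : ℝ)
    (χ : Fin 2 → ℝ) (γ : Fin 2 → Fin 2 → ℝ)
    (h0 : 0 < Qform α β ξ χ γ) (h1 : Qform α β ξ χ γ < 1) :
    ∃ D : ((Fin 2 → ℝ) × (Fin 2 → Fin 2 → ℝ)) →L[ℝ]
        ((Fin 2 → ℝ) × (Fin 2 → Fin 2 → ℝ)) →L[ℝ] ℝ,
      HasFDerivAt
        (fderiv ℝ (fun p : (Fin 2 → ℝ) × (Fin 2 → Fin 2 → ℝ) => Wdens α β ξ p.1 p.2))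
        D (χ, γ) ∧
      ∀ (a : Fin 2 → ℝ) (b : Fin 2 → Fin 2 → ℝ),
        D (a, b) (a, b) =
          (1 / β ^ 2) * Qform α β ξ a b / (1 - Real.sqrt (Qform α β ξ χ γ)) +
          (β ^ 2 / (Real.sqrt (Qform α β ξ χ γ) *
              (1 - Real.sqrt (Qform α β ξ χ γ)) ^ 2)) *
            (α ^ 2 * (a 0 * χ 0 + a 1 * χ 1) +
             ξ ^ 2 * (b 0 0 * γ 0 0 + b 0 1 * γ 0 1 +
                      b 1 0 * γ 1 0 + b 1 1 * γ 1 1)) ^ 2 := by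
  have hW : (fun p : (Fin 2 → ℝ) × (Fin 2 → Fin 2 → ℝ) => Wdens α β ξ p.1 p.2) =
      fun p => energyProfile (1 / β ^ 2) (Qpolar α β ξ p p) := by
    funext p; rw [Qpolar_self]; rfl
  have hφ : ∀ᶠ q in 𝓝 (Qpolar α β ξ (χ, γ) (χ, γ)),
      HasDerivAt (energyProfile (1 / β ^ 2)) (1 / β ^ 2 / (2 * (1 - Real.sqrt q))) q := by
    rw [Qpolar_self]
    filter_upwards [Ioo_mem_nhds h0 h1] with q hq using hasDerivAt_energyProfile _ hq.1 hq.2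
  rw [hW]
  refine ⟨_, hasFDerivAt_fderiv_comp_bilinear_diag (Qpolar_comm α β ξ) hφ
    (hasDerivAt_deriv_energyProfile _ (by rwa [Qpolar_self]) (by rwa [Qpolar_self])),
    fun a b => ?_⟩
  have hcross : Qpolar α β ξ (χ, γ) (a, b) = β ^ 2 * (α ^ 2 * (a 0 * χ 0 + a 1 * χ 1) +
      ξ ^ 2 * (b 0 0 * γ 0 0 + b 0 1 * γ 0 1 + b 1 0 * γ 1 0 + b 1 1 * γ 1 1)) := by
    simp only [Qpolar_apply]; ring
  have hs₁ := (one_sub_sqrt_pos_s13 h1).ne'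
  simp only [add_apply, smul_apply, ContinuousLinearMap.smulRight_apply, smul_eq_mul,
    Qpolar_self, hcross]
  field_simp

/-- explicit formula for the second-derivative quadratic form of
the strain-energy density `W` at a strain `(χ, γ)` with `0 < Q(χ, γ) < 1`. -/
theorem secondDeriv_Wdens (α β ξ : ℝ) (hα : 0 < α) (hβ : 0 < β) (hξ : 0 < ξ)
    (χ : Fin 2 → ℝ) (γ : Fin 2 → Fin 2 → ℝ)
    (h0 : 0 < Qform α β ξ χ γ) (h1 : Qform α β ξ χ γ < 1) :
    ∃ D : ((Fin 2 → ℝ) × (Fin 2 → Fin 2 → ℝ)) →L[ℝ]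
        ((Fin 2 → ℝ) × (Fin 2 → Fin 2 → ℝ)) →L[ℝ] ℝ,
      HasFDerivAt
        (fderiv ℝ (fun p : (Fin 2 → ℝ) × (Fin 2 → Fin 2 → ℝ) => Wdens α β ξ p.1 p.2))
        D (χ, γ) ∧
      ∀ (a : Fin 2 → ℝ) (b : Fin 2 → Fin 2 → ℝ),
        D (a, b) (a, b) =
          (1 / β ^ 2) * Qform α β ξ a b / (1 - Real.sqrt (Qform α β ξ χ γ)) +
          (β ^ 2 / (Real.sqrt (Qform α β ξ χ γ) *
              (1 - Real.sqrt (Qform α β ξ χ γ)) ^ 2)) *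
            (α ^ 2 * (a 0 * χ 0 + a 1 * χ 1) +
             ξ ^ 2 * (b 0 0 * γ 0 0 + b 0 1 * γ 0 1 +
                      b 1 0 * γ 1 0 + b 1 1 * γ 1 1)) ^ 2 :=
  secondDeriv_Wdens_general α β ξ χ γ h0 h1
end
end

section
/- The constitutive map is monotone: for all positive reals α, β, ξ and all strains (χ, γ) and (χ′, γ′) in ℝ² × ℝ^{2×2} with Q(χ, γ) < 1 and Q(χ′, γ′) < 1, the stresses (m, τ) = T(χ, γ) and (m′, τ′) = T(χ′, γ′) satisfy Σᵢ (mᵢ − m′ᵢ)·(χᵢ − χ′ᵢ) + Σᵢⱼ (τᵢⱼ − τ′ᵢⱼ)·(γᵢⱼ − γ′ᵢⱼ) ≥ 0. -/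
noncomputable section

/-!
Rescaling a strain to `u = β (α χ, ξ γ)` in the Euclidean space `ℝ⁶` turns `Q` into `‖u‖²` and `T`
into `β⁻²` times the radial map `u ↦ (1 - ‖u‖)⁻¹ u` on the open unit ball. A radial map
`x ↦ f ‖x‖ • x` with `f ≥ 0` and `t ↦ t f(t)` nondecreasing is monotone on any real inner product
space: by Cauchy–Schwarz `⟪x, y⟫ ≤ ‖x‖ ‖y‖` the pairing is at least
`(‖x‖ f ‖x‖ - ‖y‖ f ‖y‖) (‖x‖ - ‖y‖) ≥ 0`.
-/

open RealInnerProductSpace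

theorem inner_smul_norm_sub_smul_norm_sub_nonneg {E : Type*} [NormedAddCommGroup E]
    [InnerProductSpace ℝ E] {f : ℝ → ℝ} {S : Set ℝ} (hf : ∀ t ∈ S, 0 ≤ f t)
    (hmono : MonotoneOn (fun t => t * f t) S) {x y : E} (hx : ‖x‖ ∈ S) (hy : ‖y‖ ∈ S) :
    0 ≤ ⟪f ‖x‖ • x - f ‖y‖ • y, x - y⟫ := by
  have hexpand : ⟪f ‖x‖ • x - f ‖y‖ • y, x - y⟫ =
      f ‖x‖ * ‖x‖ ^ 2 + f ‖y‖ * ‖y‖ ^ 2 - (f ‖x‖ + f ‖y‖) * ⟪x, y⟫ := by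
    simp only [inner_sub_left, inner_sub_right, real_inner_smul_left,
      real_inner_self_eq_norm_sq, real_inner_comm x y]
    ring
  have hprod : 0 ≤ (‖x‖ * f ‖x‖ - ‖y‖ * f ‖y‖) * (‖x‖ - ‖y‖) := by
    rcases le_total ‖x‖ ‖y‖ with h | h
    · exact mul_nonneg_of_nonpos_of_nonpos (sub_nonpos.2 (hmono hx hy h)) (sub_nonpos.2 h)
    · exact mul_nonneg (sub_nonneg.2 (hmono hy hx h)) (sub_nonneg.2 h)
  calc 0 ≤ (‖x‖ * f ‖x‖ - ‖y‖ * f ‖y‖) * (‖x‖ - ‖y‖) := hprod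
    _ = f ‖x‖ * ‖x‖ ^ 2 + f ‖y‖ * ‖y‖ ^ 2 - (f ‖x‖ + f ‖y‖) * (‖x‖ * ‖y‖) := by ring
    _ ≤ f ‖x‖ * ‖x‖ ^ 2 + f ‖y‖ * ‖y‖ ^ 2 - (f ‖x‖ + f ‖y‖) * ⟪x, y⟫ := by
      gcongr
      · exact add_nonneg (hf _ hx) (hf _ hy)
      · exact real_inner_le_norm x y
    _ = ⟪f ‖x‖ • x - f ‖y‖ • y, x - y⟫ := hexpand.symm

theorem monotoneOn_mul_inv_one_sub : MonotoneOn (fun t : ℝ => t * (1 - t)⁻¹) (Set.Iio 1) := by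
  intro a ha b hb hab
  have ha' : 0 < 1 - a := sub_pos.2 ha
  have hb' : 0 < 1 - b := sub_pos.2 hb
  dsimp only
  rw [← div_eq_mul_inv, ← div_eq_mul_inv, div_le_div_iff₀ ha' hb']
  nlinarith

theorem inner_inv_one_sub_norm_smul_sub_nonneg {E : Type*} [NormedAddCommGroup E]
    [InnerProductSpace ℝ E] {x y : E} (hx : ‖x‖ < 1) (hy : ‖y‖ < 1) :
    0 ≤ ⟪(1 - ‖x‖)⁻¹ • x - (1 - ‖y‖)⁻¹ • y, x - y⟫ :=
  inner_smul_norm_sub_smul_norm_sub_nonneg (fun _ ht => inv_nonneg.2 (sub_pos.2 ht).le)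
    monotoneOn_mul_inv_one_sub hx hy

def strainVec (α β ξ : ℝ) (χ : Fin 2 → ℝ) (γ : Fin 2 → Fin 2 → ℝ) :
    EuclideanSpace ℝ (Fin 2 ⊕ Fin 2 × Fin 2) :=
  WithLp.toLp 2 (Sum.elim (fun i => β * α * χ i) (fun p => β * ξ * γ p.1 p.2))

theorem norm_strainVec (α β ξ : ℝ) (χ : Fin 2 → ℝ) (γ : Fin 2 → Fin 2 → ℝ) :
    ‖strainVec α β ξ χ γ‖ = √(Qform α β ξ χ γ) := by
  rw [← Real.sqrt_sq (norm_nonneg _), EuclideanSpace.real_norm_sq_eq]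
  congr 1
  simp only [strainVec, Qform, Fintype.sum_sum_type, Fintype.sum_prod_type, Fin.sum_univ_two,
    Sum.elim_inl, Sum.elim_inr]
  ring

theorem norm_strainVec_lt_one {α β ξ : ℝ} {χ : Fin 2 → ℝ} {γ : Fin 2 → Fin 2 → ℝ}
    (hQ : Qform α β ξ χ γ < 1) : ‖strainVec α β ξ χ γ‖ < 1 := by
  rwa [norm_strainVec, Real.sqrt_lt' one_pos, one_pow]

theorem Tmap_pairing_eq_inner_strainVec {α β ξ : ℝ} (hβ : β ≠ 0)
    (χ χ' : Fin 2 → ℝ) (γ γ' : Fin 2 → Fin 2 → ℝ) :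
    ((Tmap α β ξ χ γ).1 0 - (Tmap α β ξ χ' γ').1 0) * (χ 0 - χ' 0) +
        ((Tmap α β ξ χ γ).1 1 - (Tmap α β ξ χ' γ').1 1) * (χ 1 - χ' 1) +
        ((Tmap α β ξ χ γ).2 0 0 - (Tmap α β ξ χ' γ').2 0 0) * (γ 0 0 - γ' 0 0) +
        ((Tmap α β ξ χ γ).2 0 1 - (Tmap α β ξ χ' γ').2 0 1) * (γ 0 1 - γ' 0 1) +
        ((Tmap α β ξ χ γ).2 1 0 - (Tmap α β ξ χ' γ').2 1 0) * (γ 1 0 - γ' 1 0) +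
        ((Tmap α β ξ χ γ).2 1 1 - (Tmap α β ξ χ' γ').2 1 1) * (γ 1 1 - γ' 1 1) =
      (β ^ 2)⁻¹ * ⟪(1 - ‖strainVec α β ξ χ γ‖)⁻¹ • strainVec α β ξ χ γ -
          (1 - ‖strainVec α β ξ χ' γ'‖)⁻¹ • strainVec α β ξ χ' γ',
        strainVec α β ξ χ γ - strainVec α β ξ χ' γ'⟫ := by
  rw [norm_strainVec, norm_strainVec]
  simp only [Tmap, strainVec, PiLp.inner_apply, PiLp.sub_apply, PiLp.smul_apply, smul_eq_mul,
    RCLike.inner_apply, Real.ringHom_apply, Fintype.sum_sum_type, Fintype.sum_prod_type,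
    Fin.sum_univ_two, Sum.elim_inl, Sum.elim_inr]
  field_simp
  ring

theorem Tmap_monotone_general (α β ξ : ℝ) (hβ : 0 < β)
    (χ χ' : Fin 2 → ℝ) (γ γ' : Fin 2 → Fin 2 → ℝ)
    (hQ : Qform α β ξ χ γ < 1) (hQ' : Qform α β ξ χ' γ' < 1) :
    0 ≤ ((Tmap α β ξ χ γ).1 0 - (Tmap α β ξ χ' γ').1 0) * (χ 0 - χ' 0) +
        ((Tmap α β ξ χ γ).1 1 - (Tmap α β ξ χ' γ').1 1) * (χ 1 - χ' 1) +
        ((Tmap α β ξ χ γ).2 0 0 - (Tmap α β ξ χ' γ').2 0 0) * (γ 0 0 - γ' 0 0) +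
        ((Tmap α β ξ χ γ).2 0 1 - (Tmap α β ξ χ' γ').2 0 1) * (γ 0 1 - γ' 0 1) +
        ((Tmap α β ξ χ γ).2 1 0 - (Tmap α β ξ χ' γ').2 1 0) * (γ 1 0 - γ' 1 0) +
        ((Tmap α β ξ χ γ).2 1 1 - (Tmap α β ξ χ' γ').2 1 1) * (γ 1 1 - γ' 1 1) := by
  rw [Tmap_pairing_eq_inner_strainVec hβ.ne']
  exact mul_nonneg (by positivity)
    (inner_inv_one_sub_norm_smul_sub_nonneg (norm_strainVec_lt_one hQ) (norm_strainVec_lt_one hQ'))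

/-- the constitutive map `T` is monotone. -/
theorem Tmap_monotone (α β ξ : ℝ) (hα : 0 < α) (hβ : 0 < β) (hξ : 0 < ξ)
    (χ χ' : Fin 2 → ℝ) (γ γ' : Fin 2 → Fin 2 → ℝ)
    (hQ : Qform α β ξ χ γ < 1) (hQ' : Qform α β ξ χ' γ' < 1) :
    0 ≤ ((Tmap α β ξ χ γ).1 0 - (Tmap α β ξ χ' γ').1 0) * (χ 0 - χ' 0) +
        ((Tmap α β ξ χ γ).1 1 - (Tmap α β ξ χ' γ').1 1) * (χ 1 - χ' 1) +
        ((Tmap α β ξ χ γ).2 0 0 - (Tmap α β ξ χ' γ').2 0 0) * (γ 0 0 - γ' 0 0) +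
        ((Tmap α β ξ χ γ).2 0 1 - (Tmap α β ξ χ' γ').2 0 1) * (γ 0 1 - γ' 0 1) +
        ((Tmap α β ξ χ γ).2 1 0 - (Tmap α β ξ χ' γ').2 1 0) * (γ 1 0 - γ' 1 0) +
        ((Tmap α β ξ χ γ).2 1 1 - (Tmap α β ξ χ' γ').2 1 1) * (γ 1 1 - γ' 1 1) :=
  Tmap_monotone_general α β ξ hβ χ χ' γ γ' hQ hQ'
end
end
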